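/- If the loss function ℓ(·, y) is λ-Lipschitz in its first argument for every y, then the Rademacher complexity of the loss class is bounded by λ times that of the function class: R_N(ℓ∘H) ≤ λ R_N(H). -/

import Mathlib

/-! Summing over the sign `σ_k` first, a Rademacher sum becomes a sum over the remaining signs
of expressions `sup_f (c_k f + t f) + sup_f (-c_k f + t f)`. Replace `c_k` by `d` with
`|d f - d g| ≤ |c_k f - c_k g|`: at maximisers `f, g` the new expression is
`t f + t g + (d f - d g) ≤ t f + t g + |c_k f - c_k g|`, and the right side is the old expression
evaluated at the competitors `(f, g)` or `(g, f)`. Contracting one coordinate at a time gives the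
comparison, and `λ ≥ 0` factors out of the suprema. -/

open Finset

section Rademacher

variable {ι α : Type*} [Fintype ι] [DecidableEq ι] {H : Finset α}

lemma sup'_add_sup'_neg_le (hH : H.Nonempty) {t a b : α → ℝ}
    (hab : ∀ f ∈ H, ∀ g ∈ H, |b f - b g| ≤ |a f - a g|) :
    H.sup' hH (fun f => b f + t f) + H.sup' hH (fun f => -b f + t f)
      ≤ H.sup' hH (fun f => a f + t f) + H.sup' hH (fun f => -a f + t f) := by
  obtain ⟨f, hf, hf_max⟩ := exists_mem_eq_sup' hH fun f => b f + t f
  obtain ⟨g, hg, hg_max⟩ := exists_mem_eq_sup' hH fun f => -b f + t f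
  rw [hf_max, hg_max]
  have hb : b f - b g ≤ |a f - a g| := (le_abs_self _).trans (hab f hf g hg)
  rcases le_total (a g) (a f) with h | h
  · rw [abs_of_nonneg (sub_nonneg.mpr h)] at hb
    linarith [le_sup' (fun f => a f + t f) hf, le_sup' (fun f => -a f + t f) hg]
  · rw [abs_of_nonpos (sub_nonpos.mpr h)] at hb
    linarith [le_sup' (fun f => a f + t f) hg, le_sup' (fun f => -a f + t f) hf]

def rademacherSum (H : Finset α) (hH : H.Nonempty) (c : ι → α → ℝ) : ℝ :=
  ∑ σ : ι → Bool, H.sup' hH fun f => ∑ i, (if σ i then (1 : ℝ) else -1) * c i f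

lemma rademacherSum_update_eq (hH : H.Nonempty) (c : ι → α → ℝ) (k : ι) (d : α → ℝ) :
    rademacherSum H hH (Function.update c k d) =
      ∑ τ : {j // j ≠ k} → Bool,
        let t f := ∑ j, (if τ j then (1 : ℝ) else -1) * c j f
        H.sup' hH (fun f => d f + t f) + H.sup' hH (fun f => -d f + t f) := by
  rw [rademacherSum, ← (Equiv.funSplitAt k Bool).symm.sum_comp, Fintype.sum_prod_type_right]
  refine sum_congr rfl fun τ _ => ?_
  simp only [Fintype.sum_bool]
  have hk (s : Bool) : (Equiv.funSplitAt k Bool).symm (s, τ) k = s := by simp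
  have hj (s : Bool) (j : {j // j ≠ k}) : (Equiv.funSplitAt k Bool).symm (s, τ) j = τ j := by
    simp [j.2]
  have hc (j : {j // j ≠ k}) : Function.update c k d j = c j := Function.update_of_ne j.2 _ _
  congr 1 <;> refine sup'_congr hH rfl fun f _ => ?_ <;>
    simp only [Fintype.sum_eq_add_sum_subtype_ne _ k, hk, hj, hc, Function.update_self] <;>
    norm_num

lemma rademacherSum_update_le (hH : H.Nonempty) (c : ι → α → ℝ) (k : ι)
    {d : α → ℝ} (hd : ∀ f ∈ H, ∀ g ∈ H, |d f - d g| ≤ |c k f - c k g|) :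
    rademacherSum H hH (Function.update c k d) ≤ rademacherSum H hH c := by
  conv_rhs => rw [← Function.update_eq_self k c]
  rw [rademacherSum_update_eq, rademacherSum_update_eq]
  exact sum_le_sum fun τ _ => sup'_add_sup'_neg_le hH hd

theorem rademacherSum_le_of_abs_sub_le (hH : H.Nonempty) {a b : ι → α → ℝ}
    (hab : ∀ i, ∀ f ∈ H, ∀ g ∈ H, |b i f - b i g| ≤ |a i f - a i g|) :
    rademacherSum H hH b ≤ rademacherSum H hH a := by
  suffices ∀ K : Finset ι, rademacherSum H hH (K.piecewise b a) ≤ rademacherSum H hH a by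
    simpa using this univ
  intro K
  induction K using Finset.induction_on with
  | empty => simp
  | insert k K hk ih =>
    rw [piecewise_insert]
    refine (rademacherSum_update_le hH _ k ?_).trans ih
    simpa [piecewise_eq_of_notMem _ _ _ hk] using hab k

lemma mul_rademacherSum (hH : H.Nonempty) (c : ι → α → ℝ) {r : ℝ} (hr : 0 ≤ r) :
    r * rademacherSum H hH c =
      ∑ σ : ι → Bool, H.sup' hH fun f => r * ∑ i, (if σ i then (1 : ℝ) else -1) * c i f := by
  simp only [rademacherSum, mul_sum, mul₀_sup' hr]

lemma rademacherSum_const_mul (hH : H.Nonempty) (c : ι → α → ℝ) {r : ℝ} (hr : 0 ≤ r) :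
    rademacherSum H hH (fun i f => r * c i f) = r * rademacherSum H hH c := by
  rw [mul_rademacherSum hH c hr]
  simp only [rademacherSum, mul_left_comm _ r, ← mul_sum]

end Rademacher

theorem stmt_4_general {X : Type*} (N : ℕ) (x : Fin N → X)
    (H : Finset (X → ℝ)) (hH : H.Nonempty)
    (φ : Fin N → ℝ → ℝ) (lam : ℝ) (hlam : 0 ≤ lam)
    (hLip : ∀ i u v, |φ i u - φ i v| ≤ lam * |u - v|) :
    (1 / 2 ^ N : ℝ) * ∑ σ : Fin N → Bool,
        H.sup' hH (fun f => (1 / N : ℝ) * ∑ i, (if σ i then (1 : ℝ) else -1) * φ i (f (x i)))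
    ≤ lam * ((1 / 2 ^ N : ℝ) * ∑ σ : Fin N → Bool,
        H.sup' hH (fun f => (1 / N : ℝ) * ∑ i, (if σ i then (1 : ℝ) else -1) * f (x i))) := by
  have hN : (0 : ℝ) ≤ 1 / N := by positivity
  have hcompare : rademacherSum H hH (fun i f => φ i (f (x i)))
      ≤ lam * rademacherSum H hH (fun i f => f (x i)) := by
    rw [← rademacherSum_const_mul hH _ hlam]
    refine rademacherSum_le_of_abs_sub_le hH fun i f _ g _ => ?_
    rw [← mul_sub, abs_mul, abs_of_nonneg hlam]
    exact hLip i _ _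
  rw [← mul_rademacherSum hH _ hN, ← mul_rademacherSum hH _ hN, mul_left_comm lam,
    mul_left_comm lam]
  gcongr

/-- Talagrand's contraction lemma: if each `φ i` is `λ`-Lipschitz with `φ i 0 = 0`, then
`R_N(φ∘H) ≤ λ R_N(H)` for a nonempty finite class `H` and fixed samples `x`. -/
theorem stmt_4 {X : Type*} (N : ℕ) (hN : 0 < N) (x : Fin N → X)
    (H : Finset (X → ℝ)) (hH : H.Nonempty)
    (φ : Fin N → ℝ → ℝ) (lam : ℝ) (hlam : 0 ≤ lam)
    (hLip : ∀ i u v, |φ i u - φ i v| ≤ lam * |u - v|)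
    (h0 : ∀ i, φ i 0 = 0) :
    (1 / 2 ^ N : ℝ) * ∑ σ : Fin N → Bool,
        H.sup' hH (fun f => (1 / N : ℝ) * ∑ i, (if σ i then (1 : ℝ) else -1) * φ i (f (x i)))
    ≤ lam * ((1 / 2 ^ N : ℝ) * ∑ σ : Fin N → Bool,
        H.sup' hH (fun f => (1 / N : ℝ) * ∑ i, (if σ i then (1 : ℝ) else -1) * f (x i))) :=
  stmt_4_general N x H hH φ lam hlam hLip
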